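/- arXiv:1603.08726 — 4 statements merged into one kernel-verified Lean document; each statement's English description precedes it below -/
import Mathlib

section
/- Let f : [0,1] → [0,∞) be a monotone nondecreasing differentiable function with f(r) > 0 for r > 0, and suppose that for all r ∈ (0,1], f(r) ≤ I · (f'(r))^{n/(n-1)} for some constant I > 0 and integer n ≥ 2. Then there exists a constant v > 0 depending only on n and I such that f(r) ≥ v · r^n for all r ∈ (0,1]. -/
open Set Real

/-!
For `α > 1` put `p = 1 - α⁻¹`. The inequality `f ≤ I (f')^α` says precisely that
`(f ^ p)' = p f ^ (-α⁻¹) f' ≥ p I ^ (-α⁻¹)`, so `f ^ p` grows at least linearly from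
`f(0) ^ p ≥ 0`. For `α = n / (n - 1)` we have `p = 1 / n`, and raising to the `n`-th power
gives `f r ≥ (p I ^ (-α⁻¹))ⁿ rⁿ`.
-/

theorem rpow_neg_inv_le_rpow_neg_inv_mul_of_le_mul_rpow {a d I α : ℝ} (ha : 0 < a) (hd : 0 ≤ d)
    (hI : 0 < I) (hα : 0 < α) (h : a ≤ I * d ^ α) :
    I ^ (-α⁻¹) ≤ a ^ (-α⁻¹) * d := by
  have hroot : a ^ α⁻¹ ≤ I ^ α⁻¹ * d := by
    calc a ^ α⁻¹ ≤ (I * d ^ α) ^ α⁻¹ := by gcongr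
      _ = I ^ α⁻¹ * d := by
        rw [mul_rpow hI.le (by positivity), ← rpow_mul hd, mul_inv_cancel₀ hα.ne', rpow_one]
  calc I ^ (-α⁻¹) = a ^ (-α⁻¹) * a ^ α⁻¹ * I ^ (-α⁻¹) := by
        rw [← rpow_add ha, neg_add_cancel, rpow_zero, one_mul]
    _ ≤ a ^ (-α⁻¹) * (I ^ α⁻¹ * d) * I ^ (-α⁻¹) := by gcongr
    _ = a ^ (-α⁻¹) * d := by
        rw [mul_comm (I ^ α⁻¹), mul_assoc, mul_assoc, ← rpow_add hI, add_neg_cancel, rpow_zero,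
          mul_one]

theorem mul_le_rpow_of_le_mul_deriv_rpow {f : ℝ → ℝ} {I α R : ℝ} (hI : 0 < I) (hα : 1 < α)
    (hR : 0 ≤ R) (hcont : ContinuousOn f (Icc 0 R))
    (hdiff : ∀ x ∈ Ioo 0 R, DifferentiableAt ℝ f x) (hmono : MonotoneOn f (Icc 0 R))
    (h0 : 0 ≤ f 0) (hpos : ∀ x ∈ Ioo 0 R, 0 < f x)
    (hineq : ∀ x ∈ Ioo 0 R, f x ≤ I * deriv f x ^ α) :
    (1 - α⁻¹) * I ^ (-α⁻¹) * R ≤ f R ^ (1 - α⁻¹) := by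
  have hp : 0 < 1 - α⁻¹ := sub_pos.2 (inv_lt_one_of_one_lt₀ hα)
  have hderiv : ∀ x ∈ Ioo 0 R, HasDerivAt (fun y => f y ^ (1 - α⁻¹))
      ((1 - α⁻¹) * (f x ^ (-α⁻¹) * deriv f x)) x := fun x hx => by
    convert (hdiff x hx).hasDerivAt.rpow_const (p := 1 - α⁻¹) (Or.inl (hpos x hx).ne') using 1
    ring_nf
  have hderiv_ge : ∀ x ∈ Ioo 0 R,
      (1 - α⁻¹) * I ^ (-α⁻¹) ≤ deriv (fun y => f y ^ (1 - α⁻¹)) x := fun x hx => by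
    -- `deriv f x ^ α` is a junk value unless `deriv f x ≥ 0`; monotonicity supplies this.
    have hf' : 0 ≤ deriv f x := by
      rw [← derivWithin_of_mem_nhds (Icc_mem_nhds hx.1 hx.2)]
      exact hmono.derivWithin_nonneg
    rw [(hderiv x hx).deriv]
    gcongr
    exact rpow_neg_inv_le_rpow_neg_inv_mul_of_le_mul_rpow (hpos x hx) hf' hI
      (zero_lt_one.trans hα) (hineq x hx)
  have hmvt := (convex_Icc 0 R).mul_sub_le_image_sub_of_le_deriv
    (hcont.rpow_const fun _ _ => Or.inr hp.le)
    (fun x hx => (hderiv x (by rwa [interior_Icc] at hx)).differentiableAt.differentiableWithinAt)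
    (fun x hx => hderiv_ge x (by rwa [interior_Icc] at hx))
    0 (left_mem_Icc.2 hR) R (right_mem_Icc.2 hR) hR
  have hg0 : 0 ≤ f 0 ^ (1 - α⁻¹) := rpow_nonneg h0 _
  linarith

/-- The isoperimetric differential inequality `f r ≤ I (f' r)^{n/(n-1)}` integrates
into a lower bound `f r ≥ v r^n` with `v = v(n, I) > 0`. -/
theorem stmt3 (n : ℕ) (hn : 2 ≤ n) (I : ℝ) (hI : 0 < I) :
    ∃ v > 0, ∀ f : ℝ → ℝ,
      (∀ x ∈ Set.Icc (0:ℝ) 1, DifferentiableAt ℝ f x) →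
      MonotoneOn f (Set.Icc 0 1) →
      (∀ x ∈ Set.Icc (0:ℝ) 1, 0 ≤ f x) →
      (∀ r ∈ Set.Ioc (0:ℝ) 1, 0 < f r) →
      (∀ r ∈ Set.Ioc (0:ℝ) 1, f r ≤ I * (deriv f r) ^ ((n : ℝ) / (n - 1))) →
      ∀ r ∈ Set.Ioc (0:ℝ) 1, v * r ^ n ≤ f r := by
  have hn1 : (1 : ℝ) < n := by exact_mod_cast hn
  set α : ℝ := n / (n - 1)
  have hα : 1 < α := (one_lt_div (by linarith)).2 (by linarith)
  have hαn : 1 - α⁻¹ = (n : ℝ)⁻¹ := by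
    simp only [α, inv_div]
    field_simp
    ring
  set c := (1 - α⁻¹) * I ^ (-α⁻¹)
  have hc : 0 < c := mul_pos (by rw [hαn]; positivity) (rpow_pos_of_pos hI _)
  refine ⟨c ^ n, by positivity, fun f hdiff hmono hnonneg hpos hineq r hr => ?_⟩
  have hsub : Icc 0 r ⊆ Icc (0 : ℝ) 1 := Icc_subset_Icc_right hr.2
  have hIoo : Ioo 0 r ⊆ Ioc (0 : ℝ) 1 := fun x hx => ⟨hx.1, hx.2.le.trans hr.2⟩
  have hroot : c * r ≤ f r ^ (n : ℝ)⁻¹ := hαn ▸ mul_le_rpow_of_le_mul_deriv_rpow hI hα hr.1.le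
    (fun x hx => (hdiff x (hsub hx)).continuousAt.continuousWithinAt)
    (fun x hx => hdiff x (hsub (Ioo_subset_Icc_self hx))) (hmono.mono hsub)
    (hnonneg 0 (left_mem_Icc.2 zero_le_one)) (fun x hx => hpos x (hIoo hx))
    (fun x hx => hineq x (hIoo hx))
  calc c ^ n * r ^ n = (c * r) ^ n := (mul_pow c r n).symm
    _ ≤ (f r ^ (n : ℝ)⁻¹) ^ n := by gcongr; exact (mul_pos hc hr.1).le
    _ = f r := rpow_inv_natCast_pow (hpos r hr).le (by omega)
end

section
/- Let f, h : [0,ρ] → ℝ satisfy f'' = −K(t)·f and h'' = −h with K(t) ≤ 1 for all t, f(0) = h(0) = 0, f(ρ) = h(ρ) = L > 0, where 0 < ρ < π. Then f(t) ≤ h(t) = (L/sin ρ)·sin t for all t ∈ [0,ρ]; in particular if ρ ≤ 1 then f(t) ≤ L for all t ∈ [0,ρ]. -/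
/-!
Sturm comparison with `sin`. For the Wronskian `W = f * cos - f' * sin` of `f` and `sin`, the
equations `f'' = -K f` and `sin'' = -sin` give `W' = (K - 1) f sin ≤ 0`, and `W 0 = 0` because
`f 0 = sin 0 = 0`; hence `W ≤ 0` on `[0, ρ]`. Since `(f / sin)' = -W / sin ^ 2`, the ratio
`f / sin` is monotone on `(0, ρ]`, so `f s / sin s ≤ f ρ / sin ρ = L / sin ρ`. When
`ρ ≤ 1 < π / 2`, `sin` is increasing on `[0, ρ]`, which gives `f ≤ L`.
-/

open Set Real

def wronskian (f f' g g' : ℝ → ℝ) (t : ℝ) : ℝ :=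
  f t * g' t - f' t * g t

section Wronskian

variable {f f' g g' K M : ℝ → ℝ} {D : Set ℝ}

theorem hasDerivAt_wronskian {t k m : ℝ} (hf : HasDerivAt f (f' t) t)
    (hf' : HasDerivAt f' (-k * f t) t) (hg : HasDerivAt g (g' t) t)
    (hg' : HasDerivAt g' (-m * g t) t) :
    HasDerivAt (wronskian f f' g g') ((k - m) * f t * g t) t :=
  ((hf.mul hg').sub (hf'.mul hg)).congr_deriv (by ring)

theorem antitoneOn_wronskian (hD : Convex ℝ D) (hf : ∀ t ∈ D, HasDerivAt f (f' t) t)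
    (hf' : ∀ t ∈ D, HasDerivAt f' (-K t * f t) t) (hg : ∀ t ∈ D, HasDerivAt g (g' t) t)
    (hg' : ∀ t ∈ D, HasDerivAt g' (-M t * g t) t) (hKM : ∀ t ∈ interior D, K t ≤ M t)
    (hfg : ∀ t ∈ interior D, 0 ≤ f t * g t) :
    AntitoneOn (wronskian f f' g g') D := by
  have hW : ∀ t ∈ D, HasDerivAt (wronskian f f' g g') ((K t - M t) * f t * g t) t :=
    fun t ht => hasDerivAt_wronskian (hf t ht) (hf' t ht) (hg t ht) (hg' t ht)
  refine antitoneOn_of_hasDerivWithinAt_nonpos hD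
    (fun t ht => (hW t ht).continuousAt.continuousWithinAt)
    (fun t ht => (hW t (interior_subset ht)).hasDerivWithinAt) fun t ht => ?_
  rw [mul_assoc]
  exact mul_nonpos_of_nonpos_of_nonneg (sub_nonpos.2 (hKM t ht)) (hfg t ht)

theorem monotoneOn_div_of_wronskian_nonpos (hD : Convex ℝ D)
    (hf : ∀ t ∈ D, HasDerivAt f (f' t) t) (hg : ∀ t ∈ D, HasDerivAt g (g' t) t)
    (hg0 : ∀ t ∈ D, g t ≠ 0) (hW : ∀ t ∈ interior D, wronskian f f' g g' t ≤ 0) :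
    MonotoneOn (fun t => f t / g t) D := by
  have hdiv : ∀ t ∈ D, HasDerivAt (fun t => f t / g t) (-wronskian f f' g g' t / g t ^ 2) t :=
    fun t ht => ((hf t ht).div (hg t ht) (hg0 t ht)).congr_deriv (by rw [wronskian]; ring)
  refine monotoneOn_of_hasDerivWithinAt_nonneg hD
    (fun t ht => (hdiv t ht).continuousAt.continuousWithinAt)
    (fun t ht => (hdiv t (interior_subset ht)).hasDerivWithinAt) fun t ht => ?_
  exact div_nonneg (neg_nonneg.2 (hW t ht)) (sq_nonneg _)

theorem monotoneOn_div_of_sturm {a b : ℝ} (hab : a ≤ b)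
    (hf : ∀ t ∈ Icc a b, HasDerivAt f (f' t) t)
    (hf' : ∀ t ∈ Icc a b, HasDerivAt f' (-K t * f t) t)
    (hg : ∀ t ∈ Icc a b, HasDerivAt g (g' t) t)
    (hg' : ∀ t ∈ Icc a b, HasDerivAt g' (-M t * g t) t)
    (hKM : ∀ t ∈ Ioo a b, K t ≤ M t) (hfg : ∀ t ∈ Ioo a b, 0 ≤ f t * g t)
    (hWa : wronskian f f' g g' a = 0) (hg0 : ∀ t ∈ Ioc a b, g t ≠ 0) :
    MonotoneOn (fun t => f t / g t) (Ioc a b) := by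
  have hW : AntitoneOn (wronskian f f' g g') (Icc a b) :=
    antitoneOn_wronskian (convex_Icc a b) hf hf' hg hg' (by rwa [interior_Icc])
      (by rwa [interior_Icc])
  refine monotoneOn_div_of_wronskian_nonpos (convex_Ioc a b)
    (fun t ht => hf t (Ioc_subset_Icc_self ht)) (fun t ht => hg t (Ioc_subset_Icc_self ht)) hg0
    fun t ht => ?_
  rw [interior_Ioc] at ht
  exact hWa ▸ hW (left_mem_Icc.2 hab) (Ioo_subset_Icc_self ht) ht.1.le

end Wronskian

theorem stmt8_general (ρ L : ℝ) (hρ : ρ ∈ Set.Ioo 0 Real.pi) (hL : 0 < L)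
    (K f : ℝ → ℝ)
    (hK : ∀ s ∈ Set.Icc 0 ρ, K s ≤ 1)
    (hfd : ∀ s ∈ Set.Icc 0 ρ, DifferentiableAt ℝ f s)
    (hfd' : ∀ s ∈ Set.Icc 0 ρ, DifferentiableAt ℝ (deriv f) s)
    (hode : ∀ s ∈ Set.Icc 0 ρ, deriv (deriv f) s = -K s * f s)
    (hf0 : f 0 = 0) (hfρ : f ρ = L)
    (hfpos : ∀ s ∈ Set.Ioo 0 ρ, 0 < f s) :
    (∀ s ∈ Set.Icc 0 ρ, f s ≤ (L / Real.sin ρ) * Real.sin s) ∧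
    (ρ ≤ 1 → ∀ s ∈ Set.Icc 0 ρ, f s ≤ L) := by
  obtain ⟨hρ0, hρπ⟩ := hρ
  have hsin : ∀ s ∈ Ioc 0 ρ, 0 < sin s := fun s hs =>
    sin_pos_of_pos_of_lt_pi hs.1 (hs.2.trans_lt hρπ)
  have hsinρ : 0 < sin ρ := hsin ρ ⟨hρ0, le_rfl⟩
  have hmono : MonotoneOn (fun s => f s / sin s) (Ioc 0 ρ) :=
    monotoneOn_div_of_sturm (M := 1) hρ0.le (fun s hs => (hfd s hs).hasDerivAt)
      (fun s hs => hode s hs ▸ (hfd' s hs).hasDerivAt) (fun s _ => hasDerivAt_sin s)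
      (fun s _ => by simpa using hasDerivAt_cos s) (fun s hs => hK s (Ioo_subset_Icc_self hs))
      (fun s hs => mul_nonneg (hfpos s hs).le (hsin s (Ioo_subset_Ioc_self hs)).le)
      (by simp [wronskian, hf0]) fun s hs => (hsin s hs).ne'
  have hcomp : ∀ s ∈ Icc 0 ρ, f s ≤ (L / sin ρ) * sin s := by
    rintro s ⟨hs0, hsρ⟩
    rcases hs0.eq_or_lt with rfl | hs0
    · simp [hf0]
    have hratio : f s / sin s ≤ f ρ / sin ρ := hmono ⟨hs0, hsρ⟩ ⟨hρ0, le_rfl⟩ hsρ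
    rwa [hfρ, div_le_iff₀ (hsin s ⟨hs0, hsρ⟩)] at hratio
  refine ⟨hcomp, fun hρ1 s hs => ?_⟩
  have hsin_le : sin s ≤ sin ρ :=
    sin_le_sin_of_le_of_le_pi_div_two (by linarith [pi_pos, hs.1])
      (hρ1.trans one_le_pi_div_two) hs.2
  calc f s ≤ (L / sin ρ) * sin s := hcomp s hs
    _ ≤ (L / sin ρ) * sin ρ := mul_le_mul_of_nonneg_left hsin_le (div_pos hL hsinρ).le
    _ = L := div_mul_cancel₀ L hsinρ.ne'

/-- Sturm comparison: if `f'' = -K f` with `K ≤ 1`, `f 0 = 0`, `f ρ = L > 0`,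
`f > 0` on `(0,ρ)` with `0 < ρ < π`, then `f t ≤ (L / sin ρ) sin t` on `[0,ρ]`;
in particular if `ρ ≤ 1` then `f t ≤ L`. -/
theorem stmt8 (ρ L : ℝ) (hρ : ρ ∈ Set.Ioo 0 Real.pi) (hL : 0 < L)
    (K f : ℝ → ℝ) (hKcont : ContinuousOn K (Set.Icc 0 ρ))
    (hK : ∀ s ∈ Set.Icc 0 ρ, K s ≤ 1)
    (hfd : ∀ s ∈ Set.Icc 0 ρ, DifferentiableAt ℝ f s)
    (hfd' : ∀ s ∈ Set.Icc 0 ρ, DifferentiableAt ℝ (deriv f) s)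
    (hode : ∀ s ∈ Set.Icc 0 ρ, deriv (deriv f) s = -K s * f s)
    (hf0 : f 0 = 0) (hfρ : f ρ = L)
    (hfpos : ∀ s ∈ Set.Ioo 0 ρ, 0 < f s) :
    (∀ s ∈ Set.Icc 0 ρ, f s ≤ (L / Real.sin ρ) * Real.sin s) ∧
    (ρ ≤ 1 → ∀ s ∈ Set.Icc 0 ρ, f s ≤ L) :=
  stmt8_general ρ L hρ hL K f hK hfd hfd' hode hf0 hfρ hfpos
end

section
/- Let f_ε be as above and let 0 < d < 1. Then there exists α with 0 < α < d such that α = (ε/4)·e^{−f_ε(1−d+α)}; moreover for this α one has 2α·f_ε'(1−d+α) < 1 (interpreting f_ε'(x) = 0 for x ≤ 1−ε). -/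
/-! If `5ε ≤ 4d`, then `α = ε/4` puts `1 - d + α` in the region where `f` vanishes. Otherwise
write `1 - d + α = 1 - ε + t` with `0 < t < ε`: since `e^{-f} = 1 - (t/ε)²` there, the
fixed-point equation becomes the quadratic `4εα = ε² - t²`, which has a root `t ∈ (0, ε)` by the
intermediate value theorem, and then `2α f'(1 - d + α) = 4αt / (ε² - t²) = t/ε < 1`. -/

open Real Set

lemma exists_mem_Ioo_sq_add_mul_eq {ε d : ℝ} (hε : 0 < ε) (hd : 0 < d) (hdε : 4 * d < 5 * ε) :
    ∃ t ∈ Ioo 0 ε, t ^ 2 + 4 * ε * t = 5 * ε ^ 2 - 4 * ε * d := by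
  have hcont : ContinuousOn (fun t : ℝ => t ^ 2 + 4 * ε * t) (Icc 0 ε) := by fun_prop
  exact intermediate_value_Ioo hε.le hcont
    (show 5 * ε ^ 2 - 4 * ε * d ∈ Ioo _ _ from ⟨by nlinarith, by nlinarith⟩)

theorem stmt12_general (ε d : ℝ) (hε : 0 < ε) (hd : 0 < d)
    (f f' : ℝ → ℝ)
    (hf : ∀ x, f x = if x ≤ 1 - ε then 0 else -Real.log (1 - ((x - 1 + ε) / ε) ^ 2))
    (hf' : ∀ x, f' x = if x ≤ 1 - ε then 0 else 2 * (x - 1 + ε) / (ε ^ 2 - (x - 1 + ε) ^ 2)) :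
    ∃ α : ℝ, 0 < α ∧ α < d ∧ α = (ε / 4) * Real.exp (-(f (1 - d + α))) ∧
      2 * α * f' (1 - d + α) < 1 := by
  rcases le_or_gt (5 * ε) (4 * d) with hdε | hdε
  · have hx : 1 - d + ε / 4 ≤ 1 - ε := by linarith
    exact ⟨ε / 4, by positivity, by linarith, by simp [hf, hx], by simp [hf', hx]⟩
  obtain ⟨t, ⟨ht0, htε⟩, ht⟩ := exists_mem_Ioo_sq_add_mul_eq hε hd hdε
  have hα : ε ^ 2 - t ^ 2 = 4 * ε * (d - ε + t) := by linear_combination -ht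
  set α := d - ε + t
  have hα0 : 0 < α := by nlinarith
  have hx : 1 - d + α = 1 - ε + t := by ring
  have hxt : 1 - ε + t - 1 + ε = t := by ring
  have hlog : 0 < 1 - (t / ε) ^ 2 := by
    rw [sub_pos, div_pow, div_lt_one (by positivity)]; nlinarith
  refine ⟨α, hα0, by linarith, ?_, ?_⟩
  · rw [hx, hf, if_neg (by linarith), hxt, neg_neg, exp_log hlog]
    field_simp
    linear_combination -hα
  · rw [hx, hf', if_neg (by linarith), hxt, hα]
    calc 2 * α * (2 * t / (4 * ε * α)) = t / ε := by field_simp; ring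
      _ < 1 := (div_lt_one hε).2 htε

/-- For `0 < d < 1` there exists `0 < α < d` with `α = (ε/4) e^{-f_ε(1-d+α)}`, and
for this `α` one has `2 α f_ε'(1-d+α) < 1`. -/
theorem stmt12 (ε d : ℝ) (hε : 0 < ε) (hε2 : ε < 1/2) (hd : 0 < d) (hd1 : d < 1)
    (f f' : ℝ → ℝ)
    (hf : ∀ x, f x = if x ≤ 1 - ε then 0 else -Real.log (1 - ((x - 1 + ε) / ε) ^ 2))
    (hf' : ∀ x, f' x = if x ≤ 1 - ε then 0 else 2 * (x - 1 + ε) / (ε ^ 2 - (x - 1 + ε) ^ 2)) :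
    ∃ α : ℝ, 0 < α ∧ α < d ∧ α = (ε / 4) * Real.exp (-(f (1 - d + α))) ∧
      2 * α * f' (1 - d + α) < 1 :=
  stmt12_general ε d hε hd f f' hf hf'
end

section
/- Let 𝔩 ≥ 𝔪 ≥ 𝔫 be real numbers with 𝔫 < 0. Then ((𝔩−𝔪)²(𝔩+𝔪−𝔫) + 2(−𝔫)³)/𝔫² ≥ −𝔫. (Case analysis: if 𝔩+𝔪−𝔫 ≥ 0 this is immediate; if 𝔩+𝔪−𝔫 < 0 then 𝔪 < 𝔩 < 0, (𝔩−𝔪)² ≤ 𝔪², 𝔩+𝔪−𝔫 ≥ 𝔪, and one bounds (𝔪³ + 2(−𝔫)³)/𝔫² ≥ −𝔫.) -/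
/-- Key pointwise estimate on the reaction term: for `l ≥ m ≥ n` with `n < 0`,
`((l-m)²(l+m-n) + 2(-n)³)/n² ≥ -n`. -/
theorem stmt18 (l m n : ℝ) (hlm : m ≤ l) (hmn : n ≤ m) (hn : n < 0) :
    -n ≤ ((l - m) ^ 2 * (l + m - n) + 2 * (-n) ^ 3) / n ^ 2 := by
  rw [le_div_iff₀ (by nlinarith)]
  rcases le_or_gt 0 (l + m - n) with h | h
  · nlinarith [sq_nonneg (l - m), sq_nonneg n, mul_nonneg (sq_nonneg (l - m)) h]
  · have hl0 : l < 0 := by linarith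
    have h1 : (l - m) ^ 2 ≤ m ^ 2 := by nlinarith
    have h2 : m ≤ l + m - n := by linarith
    have h3 : (l - m) ^ 2 * (l + m - n) ≥ m ^ 2 * (l + m - n) := by nlinarith
    have h4 : m ^ 2 * (l + m - n) ≥ m ^ 2 * m := by nlinarith [sq_nonneg m]
    nlinarith [sq_nonneg (m - n), sq_nonneg (m + n)]
end
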